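/- Let H₁ = (V₁,E₁) and H₂ = (V₂,E₂) be undirected graphs, both with terminals s and t, where V₁ ∩ V₂ = {s,t} and E₁ ∩ E₂ = ∅, and let G = (V₁ ∪ V₂, E₁ ∪ E₂) be their parallel composition; let M ⊆ E₁ ∪ E₂. (i) If S₁ ⊆ E₁ is a feasible FTP solution for (H₁,s,t,M∩E₁,n₁) and S₂ ⊆ E₂ is a feasible FTP solution for (H₂,s,t,M∩E₂,n₂), then S₁ ∪ S₂ is a feasible FTP solution for (G,s,t,M,n₁+n₂+1). (ii) Conversely, if S ⊆ E₁ ∪ E₂ is a feasible FTP solution for (G,s,t,M,i), and for j ∈ {1,2} we define nⱼ as the largest integer n ≥ 0 such that S ∩ Eⱼ is feasible for (Hⱼ,s,t,M∩Eⱼ,n), with nⱼ = −1 when S ∩ Eⱼ contains no s-t path, then i ≤ n₁ + n₂ + 1. -/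

import Mathlib

/-- `uReach S a b`: the undirected graph with edge set `S` contains an `a`-`b` path. -/
def uReach {V : Type*} [DecidableEq V] (S : Finset (Sym2 V)) (a b : V) : Prop :=
  Relation.ReflTransGen (fun x y => s(x, y) ∈ S) a b

/-- Feasibility for undirected Fault-Tolerant Path: for every `F ⊆ M` with `|F| ≤ k`,
the graph `(V, S \ F)` contains an `s`-`t` path. -/
def ftpuFeasible {V : Type*} [DecidableEq V] (S M : Finset (Sym2 V)) (s t : V) (k : ℕ) : Prop :=
  ∀ F ⊆ M, F.card ≤ k → uReach (S \ F) s t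

/-- `survivesU S M s t m`: `S` tolerates any set of fewer than `m` vulnerable edge
failures. For `m ≥ 1` this is feasibility with parameter `m - 1`; `m = 0` always
holds. If `n` denotes the largest FTP parameter for which `S` is feasible (with
`n = -1` when `S` contains no `s`-`t` path), then the greatest `m` with
`survivesU S M s t m` equals `n + 1`. -/
def survivesU {V : Type*} [DecidableEq V] (S M : Finset (Sym2 V)) (s t : V) (m : ℕ) : Prop :=
  ∀ F ⊆ M, F.card < m → uReach (S \ F) s t


/-!
A failure set of size `n₁ + n₂ + 1` contains at most `n₁` edges of `E₁` or at most `n₂`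
edges of `E₂`, and the corresponding side keeps its path. Conversely, a cut of `S ∩ E₁`
and a cut of `S ∩ E₂` together cut `S`: since the two sides meet only in `s` and `t`, an
`s`-`t` path can change sides only at `s` or `t`, so one of its pieces is an `s`-`t` path
inside a single side.
-/
section

variable {V : Type*} [DecidableEq V]

lemma uReach_mono {S T : Finset (Sym2 V)} {a b : V} (hST : S ⊆ T) (h : uReach S a b) :
    uReach T a b :=
  Relation.ReflTransGen.mono (r := fun x y => s(x, y) ∈ S) (fun _ _ hxy => hST hxy) a b h

section Parallel

variable {A B : Finset (Sym2 V)} {V₁ V₂ : Set V} {s t : V}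

/-- The invariant of `uReach_union_of_inter_subset`, carried across one edge of `A`. -/
lemma uReach_sides_of_mem (hA : ∀ e ∈ A, ∀ z ∈ e, z ∈ V₁) (hV : V₁ ∩ V₂ ⊆ {s, t})
    (hst : ¬ uReach A s t) {x y : V} (hxy : s(x, y) ∈ A) (hx : x ∈ V₁ → uReach A s x) :
    (y ∈ V₁ → uReach A s y) ∧ (y ∈ V₂ → uReach B s y) := by
  have hxV : x ∈ V₁ := hA _ hxy x (Sym2.mem_mk_left x y)
  have hyV : y ∈ V₁ := hA _ hxy y (Sym2.mem_mk_right x y)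
  refine ⟨fun _ => (hx hxV).tail hxy, fun hy₂ => ?_⟩
  rcases hV ⟨hyV, hy₂⟩ with rfl | rfl
  · exact .refl
  · exact absurd ((hx hxV).tail hxy) hst

lemma uReach_union_of_inter_subset (hA : ∀ e ∈ A, ∀ z ∈ e, z ∈ V₁)
    (hB : ∀ e ∈ B, ∀ z ∈ e, z ∈ V₂) (hV : V₁ ∩ V₂ ⊆ {s, t}) (ht : t ∈ V₁)
    (h : uReach (A ∪ B) s t) : uReach A s t ∨ uReach B s t := by
  by_contra! hst
  obtain ⟨hAst, hBst⟩ := hst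
  have hV' : V₂ ∩ V₁ ⊆ {s, t} := Set.inter_comm V₂ V₁ ▸ hV
  have key : ∀ x, uReach (A ∪ B) s x → (x ∈ V₁ → uReach A s x) ∧ (x ∈ V₂ → uReach B s x) := by
    intro x hx
    induction hx with
    | refl => exact ⟨fun _ => .refl, fun _ => .refl⟩
    | tail _ hxy ih =>
      rcases Finset.mem_union.mp hxy with hxyA | hxyB
      · exact uReach_sides_of_mem hA hV hAst hxyA ih.1
      · exact (uReach_sides_of_mem hB hV' hBst hxyB ih.2).symm
  exact hAst ((key t h).1 ht)

end Parallel

lemma sdiff_inter_subset_sdiff {α : Type*} [DecidableEq α] {S E F T : Finset α} (hSE : S ⊆ E)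
    (hST : S ⊆ T) :
    S \ (F ∩ E) ⊆ T \ F := by
  intro e he
  simp only [Finset.mem_sdiff, Finset.mem_inter] at he ⊢
  exact ⟨hST he.1, fun heF => he.2 ⟨heF, hSE he.1⟩⟩

lemma ftpuFeasible_union {S₁ S₂ E₁ E₂ M : Finset (Sym2 V)} {s t : V} {n₁ n₂ : ℕ}
    (hE : Disjoint E₁ E₂) (hS₁ : S₁ ⊆ E₁) (hS₂ : S₂ ⊆ E₂)
    (h₁ : ftpuFeasible S₁ (M ∩ E₁) s t n₁) (h₂ : ftpuFeasible S₂ (M ∩ E₂) s t n₂) :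
    ftpuFeasible (S₁ ∪ S₂) M s t (n₁ + n₂ + 1) := by
  intro F hF hcard
  have hsplit : (F ∩ E₁).card + (F ∩ E₂).card ≤ F.card := by
    rw [← Finset.card_union_of_disjoint (hE.mono Finset.inter_subset_right
      Finset.inter_subset_right)]
    exact Finset.card_le_card (Finset.union_subset Finset.inter_subset_left
      Finset.inter_subset_left)
  rcases (by omega : (F ∩ E₁).card ≤ n₁ ∨ (F ∩ E₂).card ≤ n₂) with hc | hc
  · exact uReach_mono (sdiff_inter_subset_sdiff hS₁ Finset.subset_union_left)
      (h₁ _ (Finset.inter_subset_inter_right hF) hc)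
  · exact uReach_mono (sdiff_inter_subset_sdiff hS₂ Finset.subset_union_right)
      (h₂ _ (Finset.inter_subset_inter_right hF) hc)

lemma exists_cut_of_mem_upperBounds {S M : Finset (Sym2 V)} {s t : V} {m : ℕ}
    (h : m ∈ upperBounds {m | survivesU S M s t m}) :
    ∃ F ⊆ M, F.card ≤ m ∧ ¬ uReach (S \ F) s t := by
  have hnot : ¬ survivesU S M s t (m + 1) := fun hm => by simpa using h hm
  simp only [survivesU, Nat.lt_succ_iff] at hnot
  push Not at hnot
  exact hnot

lemma not_uReach_sdiff_union_of_cuts {S E₁ E₂ F₁ F₂ : Finset (Sym2 V)} {V₁ V₂ : Set V} {s t : V}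
    (hE₁ : ∀ e ∈ E₁, ∀ x ∈ e, x ∈ V₁) (hE₂ : ∀ e ∈ E₂, ∀ x ∈ e, x ∈ V₂)
    (hV : V₁ ∩ V₂ ⊆ {s, t}) (ht : t ∈ V₁) (hS : S ⊆ E₁ ∪ E₂)
    (h₁ : ¬ uReach ((S ∩ E₁) \ F₁) s t) (h₂ : ¬ uReach ((S ∩ E₂) \ F₂) s t) :
    ¬ uReach (S \ (F₁ ∪ F₂)) s t := by
  intro h
  have hsub : S \ (F₁ ∪ F₂) ⊆ (S ∩ E₁) \ F₁ ∪ (S ∩ E₂) \ F₂ := by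
    intro e he
    simp only [Finset.mem_sdiff, Finset.mem_union, Finset.mem_inter, not_or] at he ⊢
    rcases Finset.mem_union.mp (hS he.1) with h | h <;> tauto
  refine (uReach_union_of_inter_subset ?_ ?_ hV ht (uReach_mono hsub h)).elim h₁ h₂
  · exact fun e he => hE₁ e (Finset.mem_inter.mp (Finset.mem_sdiff.mp he).1).2
  · exact fun e he => hE₂ e (Finset.mem_inter.mp (Finset.mem_sdiff.mp he).1).2

end

theorem stmt11_general {V : Type*} [DecidableEq V] (V₁ V₂ : Finset V) (E₁ E₂ : Finset (Sym2 V))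
    (s t : V) (M : Finset (Sym2 V))
    (hV : V₁ ∩ V₂ = {s, t})
    (hE₁ : ∀ e ∈ E₁, ∀ x ∈ e, x ∈ V₁)
    (hE₂ : ∀ e ∈ E₂, ∀ x ∈ e, x ∈ V₂)
    (hE : E₁ ∩ E₂ = ∅) :
    (∀ (S₁ S₂ : Finset (Sym2 V)) (n₁ n₂ : ℕ), S₁ ⊆ E₁ → S₂ ⊆ E₂ →
      ftpuFeasible S₁ (M ∩ E₁) s t n₁ → ftpuFeasible S₂ (M ∩ E₂) s t n₂ →
      ftpuFeasible (S₁ ∪ S₂) M s t (n₁ + n₂ + 1)) ∧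
    (∀ (S : Finset (Sym2 V)) (i m₁ m₂ : ℕ), S ⊆ E₁ ∪ E₂ →
      ftpuFeasible S M s t i →
      IsGreatest {m : ℕ | survivesU (S ∩ E₁) (M ∩ E₁) s t m} m₁ →
      IsGreatest {m : ℕ | survivesU (S ∩ E₂) (M ∩ E₂) s t m} m₂ →
      (i : ℤ) ≤ (m₁ : ℤ) + (m₂ : ℤ) - 1) := by
  refine ⟨fun _ _ _ _ => ftpuFeasible_union (Finset.disjoint_iff_inter_eq_empty.mpr hE), ?_⟩
  intro S i m₁ m₂ hS hf hg₁ hg₂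
  obtain ⟨F₁, hF₁M, hF₁c, hF₁⟩ := exists_cut_of_mem_upperBounds hg₁.2
  obtain ⟨F₂, hF₂M, hF₂c, hF₂⟩ := exists_cut_of_mem_upperBounds hg₂.2
  have hV' : (V₁ : Set V) ∩ V₂ ⊆ {s, t} := by
    rw [← Finset.coe_inter, hV]
    simp
  have ht : t ∈ V₁ := (Finset.mem_inter.mp (hV ▸ by simp : t ∈ V₁ ∩ V₂)).1
  by_contra! hi
  refine not_uReach_sdiff_union_of_cuts hE₁ hE₂ hV' ht hS hF₁ hF₂ (hf _ ?_ ?_)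
  · exact Finset.union_subset (hF₁M.trans Finset.inter_subset_left)
      (hF₂M.trans Finset.inter_subset_left)
  · have := Finset.card_union_le F₁ F₂
    omega

/-- Parallel composition: `H₁ = (V₁, E₁)` and `H₂ = (V₂, E₂)` both have terminals
`s, t`, with `V₁ ∩ V₂ = {s, t}` and `E₁ ∩ E₂ = ∅`.
(i) If `S₁ ⊆ E₁` is feasible for `(H₁, s, t, M ∩ E₁, n₁)` and `S₂ ⊆ E₂` is feasible
for `(H₂, s, t, M ∩ E₂, n₂)`, then `S₁ ∪ S₂` is feasible for `(G, s, t, M, n₁+n₂+1)`.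
(ii) If `S ⊆ E₁ ∪ E₂` is feasible for `(G, s, t, M, i)`, and `m₁, m₂` are the
greatest survival thresholds of `S ∩ E₁`, `S ∩ E₂` (so `mⱼ = nⱼ + 1`, where `nⱼ` is
the largest feasible parameter, `nⱼ = -1` when there is no `s`-`t` path), then
`i ≤ n₁ + n₂ + 1`, i.e. `(i : ℤ) ≤ m₁ + m₂ - 1`. -/
theorem stmt11 {V : Type*} [DecidableEq V] (V₁ V₂ : Finset V) (E₁ E₂ : Finset (Sym2 V))
    (s t : V) (M : Finset (Sym2 V))
    (hV : V₁ ∩ V₂ = {s, t})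
    (hE₁ : ∀ e ∈ E₁, ∀ x ∈ e, x ∈ V₁)
    (hE₂ : ∀ e ∈ E₂, ∀ x ∈ e, x ∈ V₂)
    (hE : E₁ ∩ E₂ = ∅)
    (hs : s ∈ V₁ ∩ V₂) (ht : t ∈ V₁ ∩ V₂)
    (hM : M ⊆ E₁ ∪ E₂) :
    (∀ (S₁ S₂ : Finset (Sym2 V)) (n₁ n₂ : ℕ), S₁ ⊆ E₁ → S₂ ⊆ E₂ →
      ftpuFeasible S₁ (M ∩ E₁) s t n₁ → ftpuFeasible S₂ (M ∩ E₂) s t n₂ →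
      ftpuFeasible (S₁ ∪ S₂) M s t (n₁ + n₂ + 1)) ∧
    (∀ (S : Finset (Sym2 V)) (i m₁ m₂ : ℕ), S ⊆ E₁ ∪ E₂ →
      ftpuFeasible S M s t i →
      IsGreatest {m : ℕ | survivesU (S ∩ E₁) (M ∩ E₁) s t m} m₁ →
      IsGreatest {m : ℕ | survivesU (S ∩ E₂) (M ∩ E₂) s t m} m₂ →
      (i : ℤ) ≤ (m₁ : ℤ) + (m₂ : ℤ) - 1) :=
  stmt11_general V₁ V₂ E₁ E₂ s t M hV hE₁ hE₂ hE
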